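/- arXiv:2206.05241 — 2 statements merged into one kernel-verified Lean document; each statement's English description precedes it below -/
import Mathlib

section
/- In the infinitely repeated prisoners' dilemma with u(C,C)=(3,3), u(D,C)=(4,0), u(C,D)=(0,4), u(D,D)=(1,1) and discount factor δ ≥ 1/3, the grim-trigger strategy profile (cooperate until someone defects, then defect forever) is a subgame perfect equilibrium but is not a credible equilibrium. -/
/-!  A formal model of multi-stage games (Ismail, "Credible equilibrium").

A multi-stage game `G = (G^1, …, G^T)` is modeled by stage strategy spaces
`A t i` (possibly mixed strategies) for each stage `t` and player `i`, stage
payoff functions `u i t`, and a discount factor `δ`; a finite horizon `T` is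
the special case where stage payoffs vanish from stage `T` on.  A subgame is
identified by a stage `k` together with a history (a path, of which only the
first `k` entries matter); two subgames are equivalent iff they start at the
same stage.  -/

namespace MSG

variable {ι : Type}

/-- A path of play: an action profile at every stage. -/
abbrev PlayPath (A : ℕ → ι → Type) := ∀ t, ∀ i, A t i

/-- A strategy of player `i`: an action at every stage `t` as a function of the
history, depending only on play before stage `t`. -/
structure PStrat (A : ℕ → ι → Type) (i : ι) where
  act : ∀ t, PlayPath A → A t i
  adapted : ∀ t (p q : PlayPath A), (∀ s, s < t → p s = q s) → act t p = act t q

/-- A strategy profile. -/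
abbrev Profile (A : ℕ → ι → Type) := ∀ i, PStrat A i

/-- The play induced by profile `σ` in the subgame starting at stage `k` after
history `h`, computed up to stage `n`. -/
noncomputable def outcomeUpTo (A : ℕ → ι → Type) (σ : Profile A) (k : ℕ) (h : PlayPath A) :
    ℕ → PlayPath A
  | 0 => h
  | t + 1 =>
    Function.update (outcomeUpTo A σ k h t) t
      (if t < k then h t else fun i => (σ i).act t (outcomeUpTo A σ k h t))

/-- The path of play induced by `σ` from the subgame `(k, h)`. -/
noncomputable def outcome (A : ℕ → ι → Type) (σ : Profile A) (k : ℕ) (h : PlayPath A) :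
    PlayPath A :=
  fun t => outcomeUpTo A σ k h (t + 1) t

/-- Player `i`'s discounted payoff in the subgame starting at stage `k` after
history `h` under profile `σ`. -/
noncomputable def subPayoff (A : ℕ → ι → Type) (u : ι → ∀ t, (∀ i, A t i) → ℝ) (δ : ℝ)
    (σ : Profile A) (k : ℕ) (h : PlayPath A) (i : ι) : ℝ :=
  ∑' t : ℕ, δ ^ t * u i (k + t) (outcome A σ k h (k + t))

/-- `σ` restricted to the subgame `(k, h)` is a Nash equilibrium. -/
def NashFrom [DecidableEq ι] (A : ℕ → ι → Type) (u : ι → ∀ t, (∀ i, A t i) → ℝ) (δ : ℝ)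
    (σ : Profile A) (k : ℕ) (h : PlayPath A) : Prop :=
  ∀ i (τ : PStrat A i),
    subPayoff A u δ (Function.update σ i τ) k h i ≤ subPayoff A u δ σ k h i

/-- Subgame perfect equilibrium: Nash in every subgame. -/
def SPE [DecidableEq ι] (A : ℕ → ι → Type) (u : ι → ∀ t, (∀ i, A t i) → ℝ) (δ : ℝ)
    (σ : Profile A) : Prop :=
  ∀ k h, NashFrom A u δ σ k h

/-- Replace the first `k` stages of `p` by the history `h`. -/
def splice (A : ℕ → ι → Type) (k : ℕ) (h p : PlayPath A) : PlayPath A :=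
  fun s => if s < k then h s else p s

/-- Player `i`'s strategy `σi` has the same restriction to the equivalent
subgames `(k, h)` and `(k, h')`. -/
def SameRestriction (A : ℕ → ι → Type) {i : ι} (σi : PStrat A i) (k : ℕ)
    (h h' : PlayPath A) : Prop :=
  ∀ t, k ≤ t → ∀ p : PlayPath A, σi.act t (splice A k h p) = σi.act t (splice A k h' p)

/-- Credible equilibrium: an SPE such that whenever a player's strategy differs
on two equivalent subgames, her payoffs in those subgames coincide. -/
def Credible [DecidableEq ι] (A : ℕ → ι → Type) (u : ι → ∀ t, (∀ i, A t i) → ℝ) (δ : ℝ)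
    (σ : Profile A) : Prop :=
  SPE A u δ σ ∧ ∀ k (h h' : PlayPath A) i, ¬ SameRestriction A (σ i) k h h' →
    subPayoff A u δ σ k h i = subPayoff A u δ σ k h' i

end MSG

namespace MSG

/-- Prisoners' dilemma stage payoff (`true` = Cooperate, `false` = Defect):
`u(C,C)=3`, `u(C,D)=0`, `u(D,C)=4`, `u(D,D)=1`. -/
def pdPay (a b : Bool) : ℝ :=
  if a then (if b then 3 else 0) else (if b then 4 else 1)

/-- Stage payoffs of the infinitely repeated prisoners' dilemma with two
players indexed by `Bool`. -/
def pdU : Bool → ∀ _ : ℕ, (Bool → Bool) → ℝ :=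
  fun i _ p => pdPay (p i) (p (!i))

open Classical in
/-- The grim-trigger profile: cooperate as long as nobody has ever defected,
otherwise defect forever. -/
noncomputable def grimTrigger : Profile (fun (_ : ℕ) (_ : Bool) => Bool) :=
  fun _ =>
    { act := fun t h => if ∀ s, s < t → ∀ j, h s j = true then true else false
      adapted := by
        intro t p q hpq
        have hiff : (∀ s, s < t → ∀ j, p s j = true) ↔
            (∀ s, s < t → ∀ j, q s j = true) := by
          constructor <;> intro H s hs j
          · rw [← hpq s hs]; exact H s hs j
          · rw [hpq s hs]; exact H s hs j
        simp only [hiff] }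

end MSG

/-! Grim trigger is an SPE for `δ ≥ 1/3` by the one-shot deviation comparison: after a clean
history, the first defection gains `1` once and then loses at least `2` in every later stage,
which does not pay when `1 ≤ 2δ / (1 - δ)`; after a dirty history the opponent defects forever
and nothing beats the payoff `1`. It is not credible because the subgames at stage `1` after
`(C, C)` and after `(D, D)` are equivalent, grim trigger acts differently in them, yet the
payoffs there are `3 / (1 - δ)` and `1 / (1 - δ)`. -/

namespace MSG

section Outcome

variable {ι : Type} {A : ℕ → ι → Type} (σ : Profile A) (k : ℕ) (h : PlayPath A)

lemma outcomeUpTo_of_lt : ∀ n s, s < n → outcomeUpTo A σ k h n s = outcome A σ k h s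
  | n + 1, s, hs => by
      rcases (Nat.lt_succ_iff.mp hs).eq_or_lt with rfl | hlt
      · rfl
      · rw [outcomeUpTo, Function.update_of_ne hlt.ne]
        exact outcomeUpTo_of_lt n s hlt

lemma outcome_of_lt {t : ℕ} (ht : t < k) : outcome A σ k h t = h t := by
  rw [outcome, outcomeUpTo, Function.update_self, if_pos ht]

lemma outcome_of_le {t : ℕ} (ht : k ≤ t) (i : ι) :
    outcome A σ k h t i = (σ i).act t (outcome A σ k h) := by
  rw [outcome, outcomeUpTo, Function.update_self, if_neg (by omega)]
  exact (σ i).adapted t _ _ fun s hs => outcomeUpTo_of_lt σ k h t s hs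

end Outcome

lemma summable_pow_mul_of_abs_le {δ C : ℝ} (hδ0 : 0 ≤ δ) (hδ1 : δ < 1) {f : ℕ → ℝ}
    (hf : ∀ t, |f t| ≤ C) : Summable fun t => δ ^ t * f t :=
  Summable.of_norm_bounded ((summable_geometric_of_lt_one hδ0 hδ1).mul_right C) fun t => by
    rw [Real.norm_eq_abs, abs_mul, abs_pow, abs_of_nonneg hδ0]
    exact mul_le_mul_of_nonneg_left (hf t) (pow_nonneg hδ0 t)

lemma tsum_pow_mul_le_of_one_shot_gain {δ : ℝ} (hδ : 1 / 3 ≤ δ) (hδ1 : δ < 1) {f g : ℕ → ℝ}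
    (hf : Summable fun t => δ ^ t * f t) (hg : Summable fun t => δ ^ t * g t) {m : ℕ}
    (hlt : ∀ t < m, f t ≤ g t) (hm : f m ≤ g m + 1) (hgt : ∀ t, m < t → f t + 2 ≤ g t) :
    ∑' t, δ ^ t * f t ≤ ∑' t, δ ^ t * g t := by
  have hδ0 : 0 ≤ δ := by linarith
  have hpow : ∀ t, 0 ≤ δ ^ t := fun t => pow_nonneg hδ0 t
  have head : ∑ t ∈ Finset.range m, δ ^ t * f t ≤ ∑ t ∈ Finset.range m, δ ^ t * g t :=
    Finset.sum_le_sum fun t ht =>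
      mul_le_mul_of_nonneg_left (hlt t (Finset.mem_range.1 ht)) (hpow t)
  have geo_tail : HasSum (fun t => δ ^ (t + (m + 1))) (δ ^ (m + 1) * (1 - δ)⁻¹) := by
    simpa [pow_add, mul_comm] using (hasSum_geometric_of_lt_one hδ0 hδ1).mul_left (δ ^ (m + 1))
  have hf' := (summable_nat_add_iff (m + 1)).2 hf
  have tail : ∑' t, δ ^ (t + (m + 1)) * f (t + (m + 1)) + 2 * (δ ^ (m + 1) * (1 - δ)⁻¹) ≤
      ∑' t, δ ^ (t + (m + 1)) * g (t + (m + 1)) := by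
    rw [← geo_tail.tsum_eq, ← tsum_mul_left, ← hf'.tsum_add (geo_tail.summable.mul_left 2)]
    refine (hf'.add (geo_tail.summable.mul_left 2)).tsum_le_tsum (fun t => ?_)
      ((summable_nat_add_iff (m + 1)).2 hg)
    nlinarith [hgt (t + (m + 1)) (by omega), hpow (t + (m + 1))]
  -- the one-shot gain `δ ^ m` is outweighed by the punishment exactly when `δ ≥ 1 / 3`
  have gain_le_loss : δ ^ m ≤ 2 * (δ ^ (m + 1) * (1 - δ)⁻¹) := by
    have h1δ : 0 < 1 - δ := by linarith
    rw [show 2 * (δ ^ (m + 1) * (1 - δ)⁻¹) = δ ^ m * (2 * δ / (1 - δ)) by rw [pow_succ]; ring]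
    exact le_mul_of_one_le_right (hpow m) (by rw [le_div_iff₀ h1δ]; linarith)
  rw [← hf.sum_add_tsum_nat_add (m + 1), ← hg.sum_add_tsum_nat_add (m + 1),
    Finset.sum_range_succ, Finset.sum_range_succ]
  nlinarith [mul_le_mul_of_nonneg_left hm (hpow m)]

local notation "PD" => fun (_ : ℕ) (_ : Bool) => Bool

def AllCooperate (n : ℕ) (p : PlayPath PD) : Prop :=
  ∀ s, s < n → ∀ j, p s j = true

lemma allCooperate_succ {n : ℕ} {p : PlayPath PD} :
    AllCooperate (n + 1) p ↔ AllCooperate n p ∧ ∀ j, p n j = true := by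
  simp only [AllCooperate, Nat.lt_succ_iff_lt_or_eq, or_imp, forall_and, forall_eq]

lemma AllCooperate.mono {m n : ℕ} {p : PlayPath PD} (hp : AllCooperate n p) (hmn : m ≤ n) :
    AllCooperate m p :=
  fun s hs => hp s (by omega)

lemma allCooperate_outcome_iff {σ : Profile PD} {k n : ℕ} {h : PlayPath PD} (hn : n ≤ k) :
    AllCooperate n (outcome PD σ k h) ↔ AllCooperate n h := by
  refine forall₂_congr fun s hs => ?_
  rw [outcome_of_lt σ k h (by omega)]

lemma grimTrigger_act_eq_true_iff {i : Bool} {t : ℕ} {p : PlayPath PD} :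
    (grimTrigger i).act t p = true ↔ AllCooperate t p := by
  classical
  simp only [grimTrigger, AllCooperate]
  split_ifs <;> simp_all

lemma outcome_eq_true_iff_of_grimTrigger {σ : Profile PD} {j : Bool} (hj : σ j = grimTrigger j)
    {k n : ℕ} (hn : k ≤ n) (h : PlayPath PD) :
    outcome PD σ k h n j = true ↔ AllCooperate n (outcome PD σ k h) := by
  rw [outcome_of_le σ k h hn, hj, grimTrigger_act_eq_true_iff]

lemma allCooperate_outcome_grimTrigger {k : ℕ} {h : PlayPath PD} (hc : AllCooperate k h) :
    ∀ n, AllCooperate n (outcome PD grimTrigger k h)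
  | 0 => fun _ hs => (Nat.not_lt_zero _ hs).elim
  | n + 1 => by
      have ih := allCooperate_outcome_grimTrigger hc n
      refine allCooperate_succ.2 ⟨ih, fun j => ?_⟩
      rcases lt_or_ge n k with hn | hn
      · rw [outcome_of_lt _ _ _ hn]
        exact hc n hn j
      · exact (outcome_eq_true_iff_of_grimTrigger rfl hn h).2 ih

lemma not_allCooperate_outcome {σ : Profile PD} {k n : ℕ} {h : PlayPath PD}
    (hd : ¬ AllCooperate k h) (hn : k ≤ n) : ¬ AllCooperate n (outcome PD σ k h) :=
  fun hc => hd ((allCooperate_outcome_iff le_rfl).1 (hc.mono hn))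

lemma pdU_eq_three {i : Bool} {t : ℕ} {a : Bool → Bool} (ha : ∀ j, a j = true) :
    pdU i t a = 3 := by
  simp [pdU, pdPay, ha]

lemma pdU_eq_one {i : Bool} {t : ℕ} {a : Bool → Bool} (ha : ∀ j, a j = false) :
    pdU i t a = 1 := by
  simp [pdU, pdPay, ha]

lemma pdU_le_one {i : Bool} {t : ℕ} {a : Bool → Bool} (ha : a (!i) = false) : pdU i t a ≤ 1 := by
  simp only [pdU, pdPay, ha]; cases a i <;> norm_num

lemma abs_pdU_le (i : Bool) (t : ℕ) (a : Bool → Bool) : |pdU i t a| ≤ 4 := by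
  unfold pdU pdPay; split_ifs <;> norm_num

lemma pdU_outcome_le_one_of_grimTrigger {σ : Profile PD} {i : Bool}
    (hσ : σ (!i) = grimTrigger (!i)) {k n : ℕ} (hn : k ≤ n) {h : PlayPath PD}
    (hd : ¬ AllCooperate n (outcome PD σ k h)) : pdU i n (outcome PD σ k h n) ≤ 1 :=
  pdU_le_one (Bool.eq_false_iff.2 fun ht => hd ((outcome_eq_true_iff_of_grimTrigger hσ hn h).1 ht))

section Payoff

variable {δ : ℝ} {k : ℕ} {h : PlayPath PD}

lemma summable_subPayoff (hδ0 : 0 ≤ δ) (hδ1 : δ < 1) (σ : Profile PD) (i : Bool) :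
    Summable fun t => δ ^ t * pdU i (k + t) (outcome PD σ k h (k + t)) :=
  summable_pow_mul_of_abs_le hδ0 hδ1 fun _ => abs_pdU_le i _ _

lemma subPayoff_grimTrigger_of_allCooperate (hc : AllCooperate k h) (i : Bool) :
    subPayoff PD pdU δ grimTrigger k h i = ∑' t, δ ^ t * 3 :=
  tsum_congr fun t => by
    rw [pdU_eq_three (allCooperate_succ.1 (allCooperate_outcome_grimTrigger hc (k + t + 1))).2]

lemma subPayoff_grimTrigger_of_not_allCooperate (hd : ¬ AllCooperate k h) (i : Bool) :
    subPayoff PD pdU δ grimTrigger k h i = ∑' t, δ ^ t * 1 :=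
  tsum_congr fun t => by
    rw [pdU_eq_one fun j => Bool.eq_false_iff.2 fun ht =>
      not_allCooperate_outcome hd (Nat.le_add_right k t)
        ((outcome_eq_true_iff_of_grimTrigger rfl (Nat.le_add_right k t) h).1 ht)]

lemma nashFrom_grimTrigger_of_allCooperate (hδ : 1 / 3 ≤ δ) (hδ1 : δ < 1)
    (hc : AllCooperate k h) : NashFrom PD pdU δ grimTrigger k h := by
  classical
  intro i τ
  set σ := Function.update grimTrigger i τ
  have hσ : σ (!i) = grimTrigger (!i) := Function.update_of_ne (Bool.not_ne_self i) _ _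
  rw [subPayoff_grimTrigger_of_allCooperate hc]
  have hf := summable_subPayoff (k := k) (h := h) (by linarith) hδ1 σ i
  have hg := (summable_geometric_of_lt_one (by linarith) hδ1).mul_right 3
  by_cases hcoop : ∀ t, AllCooperate (k + t + 1) (outcome PD σ k h)
  · exact le_of_eq <| tsum_congr fun t => by
      rw [pdU_eq_three (allCooperate_succ.1 (hcoop t)).2]
  simp only [not_forall] at hcoop
  -- `Nat.find hcoop` is the first stage of the subgame at which somebody defects
  refine tsum_pow_mul_le_of_one_shot_gain hδ hδ1 hf hg (m := Nat.find hcoop) (fun t ht => ?_)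
    ((le_of_abs_le (abs_pdU_le i _ _)).trans (by norm_num)) (fun t ht => ?_)
  · exact (pdU_eq_three (allCooperate_succ.1 (not_not.1 (Nat.find_min hcoop ht))).2).le
  · have := pdU_outcome_le_one_of_grimTrigger hσ (Nat.le_add_right k t)
      fun hc' => Nat.find_spec hcoop (hc'.mono (by omega))
    linarith

lemma nashFrom_grimTrigger_of_not_allCooperate (hδ0 : 0 ≤ δ) (hδ1 : δ < 1)
    (hd : ¬ AllCooperate k h) : NashFrom PD pdU δ grimTrigger k h := by
  intro i τ
  have hσ : Function.update grimTrigger i τ (!i) = grimTrigger (!i) :=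
    Function.update_of_ne (Bool.not_ne_self i) _ _
  rw [subPayoff_grimTrigger_of_not_allCooperate hd]
  refine (summable_subPayoff hδ0 hδ1 _ i).tsum_le_tsum (fun t => ?_)
    ((summable_geometric_of_lt_one hδ0 hδ1).mul_right 1)
  exact mul_le_mul_of_nonneg_left (pdU_outcome_le_one_of_grimTrigger hσ (Nat.le_add_right k t)
    (not_allCooperate_outcome hd (Nat.le_add_right k t))) (pow_nonneg hδ0 t)

end Payoff

theorem grimTrigger_spe {δ : ℝ} (hδ : 1 / 3 ≤ δ) (hδ1 : δ < 1) : SPE PD pdU δ grimTrigger :=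
  fun k h => by
    by_cases hc : AllCooperate k h
    · exact nashFrom_grimTrigger_of_allCooperate hδ hδ1 hc
    · exact nashFrom_grimTrigger_of_not_allCooperate (by linarith) hδ1 hc

lemma not_sameRestriction_grimTrigger (i : Bool) :
    ¬ SameRestriction PD (grimTrigger i) 1 (fun _ _ => true) (fun _ _ => false) := by
  intro H
  have hsame := H 1 le_rfl fun _ _ => true
  have h1 : (grimTrigger i).act 1 (splice PD 1 (fun _ _ => true) fun _ _ => true) = true :=
    grimTrigger_act_eq_true_iff.2 fun s hs j => by simp [splice, hs]
  have h2 := grimTrigger_act_eq_true_iff.1 (hsame ▸ h1) 0 zero_lt_one true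
  simp [splice] at h2

theorem grimTrigger_not_credible {δ : ℝ} (hδ0 : 0 ≤ δ) (hδ1 : δ < 1) :
    ¬ Credible PD pdU δ grimTrigger := by
  rintro ⟨-, hcred⟩
  have hpay := hcred 1 (fun _ _ => true) (fun _ _ => false) true
    (not_sameRestriction_grimTrigger true)
  rw [subPayoff_grimTrigger_of_allCooperate (fun _ _ _ => rfl),
    subPayoff_grimTrigger_of_not_allCooperate fun hc => Bool.false_ne_true (hc 0 zero_lt_one true),
    tsum_mul_right, tsum_mul_right, tsum_geometric_of_lt_one hδ0 hδ1] at hpay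
  have : 0 < (1 - δ)⁻¹ := inv_pos.2 (by linarith)
  linarith

end MSG

open MSG in
/-- In the infinitely repeated prisoners' dilemma with
discount factor `δ ∈ [1/3, 1)`, the grim-trigger profile is a subgame perfect
equilibrium but is not a credible equilibrium. -/
theorem grim_trigger_SPE_not_credible
    (δ : ℝ) (hδ0 : (1 : ℝ) / 3 ≤ δ) (hδ1 : δ < 1) :
    SPE (fun _ _ => Bool) pdU δ grimTrigger ∧
      ¬ Credible (fun _ _ => Bool) pdU δ grimTrigger :=
  ⟨grimTrigger_spe hδ0 hδ1, grimTrigger_not_credible (by linarith) hδ1⟩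
end

section
/- In finite extensive-form games of perfect information with generic payoffs (no player is indifferent between any two terminal nodes), every subgame perfect equilibrium is a credible equilibrium; hence credible equilibrium and subgame perfect equilibrium coincide. -/
/-! In a generic game backward induction has a unique outcome: by induction on the tree, any two
subgame perfect equilibria yield the same payoff vector. At the root, if two equilibria chose
different moves, the owner would weakly prefer each equilibrium's subgame to the other's (their
payoffs being pinned down by induction), hence be indifferent between two distinct terminal nodes.
Since subgames of a generic game are generic and an SPE restricts to an SPE on every subgame,
equivalent subgames give every player the same payoff, which is the credibility condition. -/

namespace ExtGame

/-- A finite extensive-form game of perfect information: a leaf carries the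
payoff vector of a terminal node; an internal node is owned by a player and
has finitely many moves. -/
inductive GameTree (ι : Type) : Type
  | leaf : (ι → ℝ) → GameTree ι
  | node : ι → (n : ℕ) → (Fin (n + 1) → GameTree ι) → GameTree ι

variable {ι : Type}

/-- A strategy profile on a tree: a chosen move at every decision node. -/
def Profile : GameTree ι → Type
  | .leaf _ => PUnit
  | .node _ n f => Fin (n + 1) × ∀ j, Profile (f j)

/-- The payoff to player `i` when the profile is followed from the root. -/
def payoff : (g : GameTree ι) → Profile g → ι → ℝ
  | .leaf v, _, i => v i
  | .node _ _ f, σ, i => payoff (f σ.1) (σ.2 σ.1) i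

/-- `τ` agrees with `σ` except possibly at nodes owned by `i` (i.e. `τ` is a
unilateral deviation of player `i` from `σ`). -/
def AgreesOff (i : ι) : (g : GameTree ι) → Profile g → Profile g → Prop
  | .leaf _, _, _ => True
  | .node j _ f, σ, τ => (j ≠ i → σ.1 = τ.1) ∧ ∀ k, AgreesOff i (f k) (σ.2 k) (τ.2 k)

/-- Nash equilibrium: no unilateral deviation is profitable. -/
def Nash (g : GameTree ι) (σ : Profile g) : Prop :=
  ∀ i (τ : Profile g), AgreesOff i g σ τ → payoff g τ i ≤ payoff g σ i

/-- Subgame perfect equilibrium: Nash in every subgame. -/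
def SPE : (g : GameTree ι) → Profile g → Prop
  | .leaf _, _ => True
  | .node j n f, σ => Nash (.node j n f) σ ∧ ∀ k, SPE (f k) (σ.2 k)

/-- The list of subgames (subtree occurrences) of `g`, each paired with the
restriction of the profile `σ` to it. -/
def subgames : (g : GameTree ι) → Profile g → List ((g' : GameTree ι) × Profile g')
  | .leaf v, σ => [⟨.leaf v, σ⟩]
  | .node j n f, σ =>
      ⟨.node j n f, σ⟩ :: (List.finRange (n + 1)).flatMap fun k => subgames (f k) (σ.2 k)

/-- The type of player `i`'s strategies on the tree `g`. -/
def PlayerStrat (i : ι) : GameTree ι → Type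
  | .leaf _ => PUnit
  | .node j n f => (j = i → Fin (n + 1)) × ∀ k, PlayerStrat i (f k)

/-- Player `i`'s component of a strategy profile. -/
def stratOf (i : ι) : (g : GameTree ι) → Profile g → PlayerStrat i g
  | .leaf _, _ => PUnit.unit
  | .node _ _ f, σ => ⟨fun _ => σ.1, fun k => stratOf i (f k) (σ.2 k)⟩

/-- Credible equilibrium: an SPE such that for any two equivalent subgames
(identical subtrees, i.e. the same game up to relabeling in this intrinsic
representation), if a player's strategy restricted to the two subgames
differs, then her payoffs in the two subgames are equal. -/
def Credible (g : GameTree ι) (σ : Profile g) : Prop :=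
  SPE g σ ∧
    ∀ p ∈ subgames g σ, ∀ q ∈ subgames g σ, ∀ hpq : p.1 = q.1, ∀ i : ι,
      stratOf i p.1 p.2 ≠ stratOf i p.1 (cast (congrArg Profile hpq.symm) q.2) →
        payoff p.1 p.2 i = payoff q.1 q.2 i

/-- The payoff vectors of the terminal nodes of `g`. -/
def leaves : GameTree ι → List (ι → ℝ)
  | .leaf v => [v]
  | .node _ n f => (List.finRange (n + 1)).flatMap fun k => leaves (f k)

def GenericPayoffs (g : GameTree ι) : Prop :=
  (leaves g).Pairwise fun v w => ∀ i, v i ≠ w i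

theorem _root_.List.Pairwise.rel_of_mem_flatMap_of_ne {α β : Type*} {R : β → β → Prop}
    [Std.Symm R] {l : List α} {f : α → List β} (h : (l.flatMap f).Pairwise R) {a b : α}
    (ha : a ∈ l) (hb : b ∈ l) (hab : a ≠ b) {x y : β} (hx : x ∈ f a) (hy : y ∈ f b) : R x y := by
  have : Std.Symm fun a b => ∀ x ∈ f a, ∀ y ∈ f b, R x y :=
    ⟨fun _ _ h y hy x hx => Std.Symm.symm _ _ (h x hx y hy)⟩
  exact (List.pairwise_flatMap.1 h).2.forall ha hb hab x hx y hy

theorem payoff_mem_leaves : ∀ (g : GameTree ι) (σ : Profile g), payoff g σ ∈ leaves g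
  | .leaf _, _ => List.mem_singleton_self _
  | .node _ _ f, σ =>
      List.mem_flatMap.2 ⟨σ.1, List.mem_finRange _, payoff_mem_leaves (f σ.1) (σ.2 σ.1)⟩

theorem leaves_sublist_of_mem_subgames : ∀ {g : GameTree ι} {σ : Profile g},
    ∀ {p}, p ∈ subgames g σ → (leaves p.1).Sublist (leaves g)
  | .leaf _, _, _, hp => by
      obtain rfl := List.mem_singleton.1 hp
      exact List.Sublist.refl _
  | .node _ _ f, σ, _, hp => by
      rcases List.mem_cons.1 hp with rfl | hp
      · exact List.Sublist.refl _
      · obtain ⟨k, -, hk⟩ := List.mem_flatMap.1 hp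
        exact (leaves_sublist_of_mem_subgames hk).trans <|
          List.sublist_flatten_of_mem (List.mem_map_of_mem (List.mem_finRange k))

namespace GenericPayoffs

theorem of_mem_subgames {g : GameTree ι} {σ : Profile g} (hg : GenericPayoffs g)
    {p : (g' : GameTree ι) × Profile g'} (hp : p ∈ subgames g σ) : GenericPayoffs p.1 :=
  hg.sublist (leaves_sublist_of_mem_subgames hp)

theorem subtree {j : ι} {n : ℕ} {f : Fin (n + 1) → GameTree ι}
    (hg : GenericPayoffs (.node j n f)) (k : Fin (n + 1)) : GenericPayoffs (f k) :=
  (List.pairwise_flatMap.1 hg).1 k (List.mem_finRange k)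

theorem ne_of_mem_leaves_of_ne {j : ι} {n : ℕ} {f : Fin (n + 1) → GameTree ι}
    (hg : GenericPayoffs (.node j n f)) {k k' : Fin (n + 1)} (hkk' : k ≠ k')
    {v w : ι → ℝ} (hv : v ∈ leaves (f k)) (hw : w ∈ leaves (f k')) (i : ι) : v i ≠ w i :=
  have : Std.Symm fun v w : ι → ℝ => ∀ i, v i ≠ w i := ⟨fun _ _ h i => (h i).symm⟩
  List.Pairwise.rel_of_mem_flatMap_of_ne hg (List.mem_finRange k) (List.mem_finRange k') hkk'
    hv hw i

end GenericPayoffs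

theorem agreesOff_refl (i : ι) : ∀ (g : GameTree ι) (σ : Profile g), AgreesOff i g σ σ
  | .leaf _, _ => trivial
  | .node _ _ f, σ => ⟨fun _ => rfl, fun k => agreesOff_refl i (f k) (σ.2 k)⟩

theorem Nash.payoff_subtree_le {j : ι} {n : ℕ} {f : Fin (n + 1) → GameTree ι}
    {σ : Profile (.node j n f)} (hσ : Nash (.node j n f) σ) (k : Fin (n + 1)) :
    payoff (f k) (σ.2 k) j ≤ payoff (.node j n f) σ j :=
  hσ j (k, σ.2) ⟨fun h => absurd rfl h, fun k => agreesOff_refl j (f k) (σ.2 k)⟩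

namespace SPE

theorem of_mem_subgames : ∀ {g : GameTree ι} {σ : Profile g}, SPE g σ →
    ∀ {p}, p ∈ subgames g σ → SPE p.1 p.2
  | .leaf _, _, _, _, hp => by
      obtain rfl := List.mem_singleton.1 hp
      trivial
  | .node _ _ f, σ, hσ, _, hp => by
      rcases List.mem_cons.1 hp with rfl | hp
      · exact hσ
      · obtain ⟨k, -, hk⟩ := List.mem_flatMap.1 hp
        exact of_mem_subgames (hσ.2 k) hk

theorem payoff_eq_of_generic : ∀ {g : GameTree ι}, GenericPayoffs g →
    ∀ {σ τ : Profile g}, SPE g σ → SPE g τ → payoff g σ = payoff g τ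
  | .leaf _, _, _, _, _, _ => rfl
  | .node j n f, hg, σ, τ, hσ, hτ => by
      have ih : ∀ k, payoff (f k) (σ.2 k) = payoff (f k) (τ.2 k) := fun k =>
        payoff_eq_of_generic (hg.subtree k) (hσ.2 k) (hτ.2 k)
      have hmove : σ.1 = τ.1 := by
        by_contra hne
        have hστ : payoff (.node j n f) σ j ≤ payoff (.node j n f) τ j :=
          (congrFun (ih σ.1) j).trans_le (hτ.1.payoff_subtree_le σ.1)
        have hτσ : payoff (.node j n f) τ j ≤ payoff (.node j n f) σ j :=
          (congrFun (ih τ.1) j).symm.trans_le (hσ.1.payoff_subtree_le τ.1)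
        exact hg.ne_of_mem_leaves_of_ne hne (payoff_mem_leaves _ _) (payoff_mem_leaves _ _) j
          (le_antisymm hστ hτσ)
      show payoff (f σ.1) (σ.2 σ.1) = payoff (f τ.1) (τ.2 τ.1)
      rw [← hmove]
      exact ih σ.1

end SPE

end ExtGame

open ExtGame in
/-- In a finite extensive-form game of perfect information
with generic payoffs (no player is indifferent between any two terminal
nodes), every subgame perfect equilibrium is a credible equilibrium; hence
the two notions coincide. -/
theorem perfect_info_SPE_iff_credible
    {ι : Type} (g : GameTree ι)
    (hgen : (leaves g).Pairwise fun v w => ∀ i, v i ≠ w i)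
    (σ : Profile g) :
    SPE g σ ↔ Credible g σ := by
  refine ⟨fun hσ => ⟨hσ, ?_⟩, And.left⟩
  rintro p hp q hq hpq i -
  obtain ⟨t, a⟩ := p
  obtain ⟨t', b⟩ := q
  obtain rfl : t = t' := hpq
  have ha : SPE t a := hσ.of_mem_subgames hp
  have hb : SPE t b := hσ.of_mem_subgames hq
  exact congrFun (SPE.payoff_eq_of_generic (GenericPayoffs.of_mem_subgames hgen hp) ha hb) i
end
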